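/- arXiv:2506.04128 — 2 statements merged into one kernel-verified Lean document; each statement's English description precedes it below -/
import Mathlib

section
/- Let (Θ, 𝒜, ρ) be a probability space and let q : Θ × ℝ^{n×d} × {0,1}^n × ℝ^n → [0,∞) be jointly measurable with ∫_{ℝ^n} q(θ,x,a,y) dy = 1 for every (θ,x,a). Define the statistic m(y,x,a) = ∫_Θ q(θ,x,a,y) dρ(θ), and let φ be the randomized permutation test at level α ∈ [0,1] built from m. Let ν be a probability measure on ℝ^{n×d} × {0,1}^n that is invariant under a ↦ a∘τ for every permutation τ of {1,…,n}, and define the Bayesian expected power of a measurable test φ' : ℝ^n × ℝ^{n×d} × {0,1}^n → [0,1] as BEP(φ') = ∫∫_{ℝ^n} φ'(y,x,a) m(y,x,a) dy dν(x,a). Then for every test φ' satisfying E_p[φ'(D)] ≤ α for every probability measure p on the data space that satisfies H0, one has BEP(φ') ≤ BEP(φ). In particular φ maximizes the Bayesian expected power among all α-level tests of H0. -/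
/-!
On the orbit `{D^τ}` of a data set, the level constraint applied to the uniform distribution on
the orbit (which satisfies H0) gives `∑_τ φ'(D^τ) ≤ α·n!`, while the permutation test has
`∑_τ φ(D^τ) = α·n!` and is a threshold test in `m` along the orbit; the finite Neyman–Pearson
argument then gives `∑_τ (φ - φ')(D^τ)·m(D^τ) ≥ 0`. The Bayesian expected power is the integral of
`φ·m` against Lebesgue measure ⊗ `ν`, which is invariant under the permutations of the labels, so
averaging over the orbit turns the orbit-wise inequality into `BEP(φ') ≤ BEP(φ)`.
-/

open MeasureTheory

noncomputable section

/-- The data space: outcomes `y ∈ ℝⁿ`, covariates `x ∈ ℝ^{n×d}`,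
treatment labels `a ∈ {0,1}ⁿ`. -/
abbrev TrialData (n d : ℕ) : Type :=
  (Fin n → ℝ) × (Fin n → Fin d → ℝ) × (Fin n → Bool)

/-- `D^τ`: the data with permuted treatment labels. -/
def permData {n d : ℕ} (τ : Equiv.Perm (Fin n)) (D : TrialData n d) : TrialData n d :=
  (D.1, D.2.1, D.2.2 ∘ τ)

/-- The null hypothesis H0: `p` is invariant under every permutation of the
treatment-label coordinate. -/
def SatisfiesH0 {n d : ℕ} (p : Measure (TrialData n d)) : Prop :=
  ∀ τ : Equiv.Perm (Fin n), p.map (permData τ) = p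

/-- `#{τ : m(D^τ) > t}`. -/
def countGT {n d : ℕ} (m : TrialData n d → ℝ) (D : TrialData n d) (t : ℝ) : ℕ :=
  Nat.card {τ : Equiv.Perm (Fin n) | m (permData τ D) > t}

/-- `#{τ : m(D^τ) ≥ t}`. -/
def countGE {n d : ℕ} (m : TrialData n d → ℝ) (D : TrialData n d) (t : ℝ) : ℕ :=
  Nat.card {τ : Equiv.Perm (Fin n) | m (permData τ D) ≥ t}

/-- `#{τ : m(D^τ) = t}`. -/
def countEQ {n d : ℕ} (m : TrialData n d → ℝ) (D : TrialData n d) (t : ℝ) : ℕ :=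
  Nat.card {τ : Equiv.Perm (Fin n) | m (permData τ D) = t}

/-- `t` is, at each data set `D`, a `(1−α)`-quantile of the multiset
`{m(D^τ) : τ a permutation}`. -/
def IsPermQuantile {n d : ℕ} (m : TrialData n d → ℝ) (α : ℝ)
    (t : TrialData n d → ℝ) : Prop :=
  ∀ D : TrialData n d,
    (countGT m D (t D) : ℝ) ≤ α * (Nat.factorial n : ℝ) ∧
    α * (Nat.factorial n : ℝ) ≤ (countGE m D (t D) : ℝ)

/-- The randomized permutation test at level `α` built from the statistic `m`
and the quantile function `t`. -/
def permTest {n d : ℕ} (m : TrialData n d → ℝ) (α : ℝ)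
    (t : TrialData n d → ℝ) (D : TrialData n d) : ℝ :=
  if m D > t D then 1
  else if m D < t D then 0
  else (α * (Nat.factorial n : ℝ) - (countGT m D (t D) : ℝ)) / (countEQ m D (t D) : ℝ)

/-- The Bayesian expected power of a test `φ'` with respect to the density `m`
and the covariate/treatment law `ν`:
`BEP(φ') = ∫ ( ∫ φ'(y,x,a)·m(y,x,a) dy ) dν(x,a)`, the inner integral being
with respect to Lebesgue measure on `ℝⁿ`. -/
def BEP {n d : ℕ} (ν : Measure ((Fin n → Fin d → ℝ) × (Fin n → Bool)))
    (m : TrialData n d → ℝ) (φ' : TrialData n d → ℝ) : ℝ :=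
  ∫ xa, (∫ y, φ' (y, xa.1, xa.2) * m (y, xa.1, xa.2)) ∂ν

theorem sum_sub_mul_nonneg_of_threshold {ι : Type*} [Fintype ι] {φ ψ w : ι → ℝ} (c : ℝ)
    (hw : ∀ i, 0 ≤ w i) (hψ : ∀ i, ψ i ∈ Set.Icc 0 1) (hsum : ∑ i, ψ i ≤ ∑ i, φ i)
    (h_gt : ∀ i, c < w i → φ i = 1) (h_lt : ∀ i, w i < c → φ i = 0) :
    0 ≤ ∑ i, (φ i - ψ i) * w i := by
  rcases lt_or_ge c 0 with hc | hc
  · refine Finset.sum_nonneg fun i _ => ?_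
    rw [h_gt i (hc.trans_le (hw i))]
    exact mul_nonneg (sub_nonneg.2 (hψ i).2) (hw i)
  have hterm (i : ι) : 0 ≤ (φ i - ψ i) * (w i - c) := by
    rcases lt_trichotomy c (w i) with h | h | h
    · rw [h_gt i h]; exact mul_nonneg (sub_nonneg.2 (hψ i).2) (sub_nonneg.2 h.le)
    · simp [h]
    · rw [h_lt i h]; exact mul_nonneg_of_nonpos_of_nonpos (by linarith [(hψ i).1]) (by linarith)
  calc 0 ≤ ∑ i, (φ i - ψ i) * (w i - c) + c * (∑ i, φ i - ∑ i, ψ i) :=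
        add_nonneg (Finset.sum_nonneg fun i _ => hterm i) (mul_nonneg hc (sub_nonneg.2 hsum))
    _ = ∑ i, (φ i - ψ i) * w i := by
        rw [← Finset.sum_sub_distrib, Finset.mul_sum, ← Finset.sum_add_distrib]
        exact Finset.sum_congr rfl fun i _ => by ring

section Integration

variable {X Y : Type*} [MeasurableSpace X] [MeasurableSpace Y]

theorem integral_nonneg_of_sum_comp_nonneg {ι : Type*} [Fintype ι] [Nonempty ι] {μ : Measure X}
    {T : ι → X → X} (hT : ∀ i, MeasurePreserving (T i) μ μ) {f : X → ℝ} (hf : Integrable f μ)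
    (h : ∀ x, 0 ≤ ∑ i, f (T i x)) : 0 ≤ ∫ x, f x ∂μ := by
  have hcomp (i : ι) : ∫ x, f (T i x) ∂μ = ∫ x, f x ∂μ := by
    rw [← integral_map (hT i).aemeasurable (by rw [(hT i).map_eq]; exact hf.1), (hT i).map_eq]
  have hsum : ∫ x, ∑ i, f (T i x) ∂μ = Fintype.card ι * ∫ x, f x ∂μ := by
    have hint (i : ι) : Integrable (fun x => f (T i x)) μ := (hT i).integrable_comp_of_integrable hf
    rw [integral_finsetSum _ fun i _ => hint i]
    simp [hcomp]
  have := hsum ▸ integral_nonneg (μ := μ) (f := fun x => ∑ i, f (T i x)) h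
  exact nonneg_of_mul_nonneg_right this (by exact_mod_cast Fintype.card_pos)

variable {μ : Measure X} {ν : Measure Y}

theorem integrable_prod_of_integral_eq_one [SFinite μ] [IsFiniteMeasure ν] {f : X × Y → ℝ}
    (hf : AEStronglyMeasurable f (μ.prod ν)) (h0 : ∀ p, 0 ≤ f p)
    (h1 : ∀ y, ∫ x, f (x, y) ∂μ = 1) : Integrable f (μ.prod ν) := by
  refine (integrable_prod_iff' hf).2 ⟨ae_of_all _ fun y => ?_, ?_⟩
  · exact Integrable.of_integral_ne_zero (by rw [h1]; exact one_ne_zero)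
  · simp_rw [Real.norm_of_nonneg (h0 _), h1]
    exact integrable_const 1

theorem MeasureTheory.Integrable.mul_of_mem_Icc {m g : X → ℝ} (hm : Integrable m μ)
    (hg : AEStronglyMeasurable g μ) (hg01 : ∀ x, g x ∈ Set.Icc (0 : ℝ) 1) :
    Integrable (fun x => g x * m x) μ :=
  hm.bdd_mul hg (c := 1) <| ae_of_all _ fun x => by
    rw [Real.norm_of_nonneg (hg01 x).1]; exact (hg01 x).2

theorem integral_integral_eq_one [SFinite μ] [IsProbabilityMeasure ν] {f : X → Y → ℝ}
    (hf : AEStronglyMeasurable (Function.uncurry f) (μ.prod ν)) (h0 : ∀ x y, 0 ≤ f x y)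
    (h1 : ∀ y, ∫ x, f x y ∂μ = 1) : ∫ x, ∫ y, f x y ∂ν ∂μ = 1 := by
  rw [integral_integral_swap (integrable_prod_of_integral_eq_one hf (fun p => h0 _ _) h1)]
  simp [h1]

end Integration

section Counting

variable {n d : ℕ}

lemma permData_permData (σ τ : Equiv.Perm (Fin n)) (D : TrialData n d) :
    permData τ (permData σ D) = permData (σ * τ) D := rfl

lemma measurable_permData (τ : Equiv.Perm (Fin n)) :
    Measurable (permData τ : TrialData n d → TrialData n d) := by
  unfold permData
  fun_prop

lemma natCard_setOf_eq_sum_ite {ι : Type*} [Fintype ι] (p : ι → Prop) [DecidablePred p] :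
    (Nat.card {i | p i} : ℝ) = ∑ i, if p i then 1 else 0 := by
  rw [Finset.sum_boole, Nat.card_eq_fintype_card, Fintype.card_subtype]
  rfl

variable (m : TrialData n d → ℝ) (D : TrialData n d)

lemma natCard_setOf_permData_permData (p : ℝ → Prop) (σ : Equiv.Perm (Fin n)) :
    Nat.card {τ : Equiv.Perm (Fin n) | p (m (permData τ (permData σ D)))}
      = Nat.card {τ : Equiv.Perm (Fin n) | p (m (permData τ D))} :=
  Nat.card_congr <| (Equiv.mulLeft σ).subtypeEquiv fun _ => Iff.rfl

lemma countGT_permData (σ : Equiv.Perm (Fin n)) (c : ℝ) :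
    countGT m (permData σ D) c = countGT m D c :=
  natCard_setOf_permData_permData m D (· > c) σ

lemma countGE_permData (σ : Equiv.Perm (Fin n)) (c : ℝ) :
    countGE m (permData σ D) c = countGE m D c :=
  natCard_setOf_permData_permData m D (· ≥ c) σ

lemma countEQ_permData (σ : Equiv.Perm (Fin n)) (c : ℝ) :
    countEQ m (permData σ D) c = countEQ m D c :=
  natCard_setOf_permData_permData m D (· = c) σ

lemma countGE_eq_countGT_add_countEQ (c : ℝ) :
    (countGE m D c : ℝ) = countGT m D c + countEQ m D c := by
  classical
  simp only [countGE, countGT, countEQ, natCard_setOf_eq_sum_ite, ← Finset.sum_add_distrib]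
  refine Finset.sum_congr rfl fun τ _ => ?_
  rcases lt_trichotomy c (m (permData τ D)) with h | h | h
  · simp [h, h.le, h.ne']
  · simp [h]
  · simp [h.not_ge, h.ne, h.le]

lemma countGE_le_countGT {c v : ℝ} (h : c < v) : countGE m D v ≤ countGT m D c :=
  Nat.card_mono (Set.toFinite _) fun _ hτ => h.trans_le hτ

lemma countEQ_self_pos : 0 < countEQ m D (m D) :=
  have : Nonempty {τ : Equiv.Perm (Fin n) | m (permData τ D) = m D} := ⟨⟨1, rfl⟩⟩
  Nat.card_pos

end Counting

section PermutationTest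

variable {n d : ℕ} {m : TrialData n d → ℝ} {α : ℝ}

def IsOrbitQuantile (m : TrialData n d → ℝ) (α : ℝ) (D : TrialData n d) (c : ℝ) : Prop :=
  (countGT m D c : ℝ) ≤ α * (Nat.factorial n : ℝ) ∧
    α * (Nat.factorial n : ℝ) ≤ (countGE m D c : ℝ)

lemma IsOrbitQuantile.permData {D : TrialData n d} {c : ℝ} (hc : IsOrbitQuantile m α D c)
    (σ : Equiv.Perm (Fin n)) : IsOrbitQuantile m α (permData σ D) c := by
  rwa [IsOrbitQuantile, countGT_permData, countGE_permData]

/-- At a quantile threshold the value of the test does not depend on which quantile is chosen. -/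
lemma permTest_eq_max_min {t : TrialData n d → ℝ} {D : TrialData n d}
    (hq : IsOrbitQuantile m α D (t D)) :
    permTest m α t D = max 0 (min 1
      ((α * (Nat.factorial n : ℝ) - countGT m D (m D)) / countEQ m D (m D))) := by
  obtain ⟨hGT, hGE⟩ := hq
  have hEQ : (0 : ℝ) < countEQ m D (m D) := by exact_mod_cast countEQ_self_pos m D
  have hsplit := countGE_eq_countGT_add_countEQ m D (m D)
  rcases lt_trichotomy (t D) (m D) with h | h | h
  · have : (countGE m D (m D) : ℝ) ≤ countGT m D (t D) := by
      exact_mod_cast countGE_le_countGT m D h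
    have : 1 ≤ (α * (Nat.factorial n : ℝ) - countGT m D (m D)) / countEQ m D (m D) := by
      rw [le_div_iff₀ hEQ]; linarith
    simp [permTest, h, this]
  · rw [h] at hGT hGE
    have h0 : 0 ≤ (α * (Nat.factorial n : ℝ) - countGT m D (m D)) / countEQ m D (m D) :=
      div_nonneg (by linarith) hEQ.le
    have h1 : (α * (Nat.factorial n : ℝ) - countGT m D (m D)) / countEQ m D (m D) ≤ 1 := by
      rw [div_le_one hEQ]; linarith
    simp [permTest, h, min_eq_right h1, max_eq_right h0]
  · have : (countGE m D (t D) : ℝ) ≤ countGT m D (m D) := by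
      exact_mod_cast countGE_le_countGT m D h
    have : (α * (Nat.factorial n : ℝ) - countGT m D (m D)) / countEQ m D (m D) ≤ 0 :=
      div_nonpos_of_nonpos_of_nonneg (by linarith) hEQ.le
    simp [permTest, h, h.not_gt, this]

lemma sum_permTest_const_permData {D : TrialData n d} {c : ℝ} (hc : IsOrbitQuantile m α D c) :
    ∑ τ : Equiv.Perm (Fin n), permTest m α (fun _ => c) (permData τ D)
      = α * (Nat.factorial n : ℝ) := by
  classical
  set γ := (α * (Nat.factorial n : ℝ) - countGT m D c) / countEQ m D c with hγ
  have hterm (τ : Equiv.Perm (Fin n)) : permTest m α (fun _ => c) (permData τ D)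
      = (if m (permData τ D) > c then 1 else 0) + γ * (if m (permData τ D) = c then 1 else 0) := by
    rcases lt_trichotomy c (m (permData τ D)) with h | h | h
    · simp [permTest, h, h.ne']
    · simp [permTest, h, countGT_permData, countEQ_permData, hγ]
    · simp [permTest, h, h.ne, h.not_gt]
  simp only [hterm, Finset.sum_add_distrib, ← Finset.mul_sum, ← natCard_setOf_eq_sum_ite]
  change (countGT m D c : ℝ) + γ * countEQ m D c = _
  have hsplit := countGE_eq_countGT_add_countEQ m D c
  rcases (Nat.cast_nonneg (α := ℝ) (countEQ m D c)).eq_or_lt with h | h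
  · rw [← h] at hsplit ⊢
    linarith [hc.1, hc.2]
  · rw [hγ, div_mul_cancel₀ _ h.ne']
    ring

variable {t : TrialData n d → ℝ}

lemma permTest_mem_Icc (hqt : IsPermQuantile m α t) (D : TrialData n d) :
    permTest m α t D ∈ Set.Icc 0 1 := by
  rw [permTest_eq_max_min (hqt D)]
  exact ⟨le_max_left _ _, max_le zero_le_one (min_le_left _ _)⟩

lemma permTest_permData (hqt : IsPermQuantile m α t) (D : TrialData n d)
    (τ : Equiv.Perm (Fin n)) :
    permTest m α t (permData τ D) = permTest m α (fun _ => t D) (permData τ D) := by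
  have hq : IsOrbitQuantile m α (permData τ D) (t D) := IsOrbitQuantile.permData (hqt D) τ
  rw [permTest_eq_max_min (hqt _), permTest_eq_max_min (t := fun _ => t D) hq]

lemma measurable_permTest (hm : Measurable m) (ht : Measurable t) :
    Measurable (permTest m α t) := by
  classical
  have hGT : Measurable fun D => (countGT m D (t D) : ℝ) := by
    simp only [countGT, natCard_setOf_eq_sum_ite]
    exact Finset.measurable_sum _ fun τ _ => Measurable.ite
      (measurableSet_lt ht (hm.comp (measurable_permData τ))) measurable_const measurable_const
  have hEQ : Measurable fun D => (countEQ m D (t D) : ℝ) := by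
    simp only [countEQ, natCard_setOf_eq_sum_ite]
    exact Finset.measurable_sum _ fun τ _ => Measurable.ite
      (measurableSet_eq_fun (hm.comp (measurable_permData τ)) ht) measurable_const measurable_const
  exact Measurable.ite (measurableSet_lt ht hm) measurable_const <|
    Measurable.ite (measurableSet_lt hm ht) measurable_const <| (measurable_const.sub hGT).div hEQ

end PermutationTest

section LevelConstraint

variable {n d : ℕ}

def orbitMeasure (D : TrialData n d) : Measure (TrialData n d) :=
  (Nat.factorial n : ENNReal)⁻¹ • ∑ τ : Equiv.Perm (Fin n), Measure.dirac (permData τ D)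

lemma integral_orbitMeasure (D : TrialData n d) (f : TrialData n d → ℝ) :
    ∫ E, f E ∂orbitMeasure D
      = (Nat.factorial n : ℝ)⁻¹ * ∑ τ : Equiv.Perm (Fin n), f (permData τ D) := by
  rw [orbitMeasure, integral_smul_measure,
    integral_finsetSum_measure fun τ _ => integrable_dirac enorm_lt_top]
  simp [integral_dirac]

instance (D : TrialData n d) : IsProbabilityMeasure (orbitMeasure D) := by
  constructor
  simp [orbitMeasure, Fintype.card_perm, ENNReal.inv_mul_cancel, Nat.factorial_ne_zero]

lemma satisfiesH0_orbitMeasure (D : TrialData n d) : SatisfiesH0 (orbitMeasure D) := by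
  intro σ
  rw [orbitMeasure, Measure.map_smul,
    Measure.map_finset_sum' (measurable_permData σ).aemeasurable]
  simp only [Measure.map_dirac, permData_permData]
  congr 1
  exact Fintype.sum_equiv (Equiv.mulRight σ) _ _ fun _ => rfl

lemma sum_permData_le_of_level {α : ℝ} {φ : TrialData n d → ℝ}
    (hlevel : ∀ p : Measure (TrialData n d), IsProbabilityMeasure p →
      SatisfiesH0 p → ∫ D, φ D ∂p ≤ α) (D : TrialData n d) :
    ∑ τ : Equiv.Perm (Fin n), φ (permData τ D) ≤ α * (Nat.factorial n : ℝ) := by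
  have h := hlevel (orbitMeasure D) inferInstance (satisfiesH0_orbitMeasure D)
  rwa [integral_orbitMeasure, inv_mul_le_iff₀ (by positivity), mul_comm] at h

end LevelConstraint

section BayesianExpectedPower

variable {n d : ℕ}

lemma measurable_mixture {Θ : Type} [MeasurableSpace Θ] {ρ : Measure Θ} [SFinite ρ]
    {q : Θ → (Fin n → Fin d → ℝ) → (Fin n → Bool) → (Fin n → ℝ) → ℝ}
    (hq : Measurable (fun z : Θ × (Fin n → Fin d → ℝ) × (Fin n → Bool) × (Fin n → ℝ) =>
      q z.1 z.2.1 z.2.2.1 z.2.2.2)) :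
    Measurable fun D : TrialData n d => ∫ θ, q θ D.2.1 D.2.2 D.1 ∂ρ :=
  (StronglyMeasurable.integral_prod_right'
    (f := fun p : TrialData n d × Θ => q p.2 p.1.2.1 p.1.2.2 p.1.1)
    (hq.comp (f := fun p : TrialData n d × Θ => (p.2, p.1.2.1, p.1.2.2, p.1.1))
      (by fun_prop)).stronglyMeasurable).measurable

lemma integral_mixture_eq_one {Θ : Type} [MeasurableSpace Θ] {ρ : Measure Θ}
    [IsProbabilityMeasure ρ] {q : Θ → (Fin n → Fin d → ℝ) → (Fin n → Bool) → (Fin n → ℝ) → ℝ}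
    (hq : Measurable (fun z : Θ × (Fin n → Fin d → ℝ) × (Fin n → Bool) × (Fin n → ℝ) =>
      q z.1 z.2.1 z.2.2.1 z.2.2.2))
    (hq_nonneg : ∀ θ x a y, 0 ≤ q θ x a y) (hq_norm : ∀ θ x a, ∫ y, q θ x a y = 1)
    (x : Fin n → Fin d → ℝ) (a : Fin n → Bool) :
    ∫ y, ∫ θ, q θ x a y ∂ρ = 1 :=
  integral_integral_eq_one (f := fun y θ => q θ x a y)
    (hq.comp (f := fun p : (Fin n → ℝ) × Θ => (p.2, x, a, p.1)) (by fun_prop)).aestronglyMeasurable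
    (fun _ _ => hq_nonneg _ _ _ _) fun θ => hq_norm θ x a

variable {ν : Measure ((Fin n → Fin d → ℝ) × (Fin n → Bool))}

lemma measurePreserving_permData [SFinite ν]
    (hν : ∀ τ : Equiv.Perm (Fin n),
      ν.map (fun xa : (Fin n → Fin d → ℝ) × (Fin n → Bool) => (xa.1, xa.2 ∘ τ)) = ν)
    (τ : Equiv.Perm (Fin n)) :
    MeasurePreserving (permData τ) ((volume : Measure (Fin n → ℝ)).prod ν)
      ((volume : Measure (Fin n → ℝ)).prod ν) :=
  (MeasurePreserving.id volume).prod ⟨by fun_prop, hν τ⟩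

lemma BEP_eq_integral_prod [SFinite ν] {m g : TrialData n d → ℝ}
    (h : Integrable (fun D => g D * m D) ((volume : Measure (Fin n → ℝ)).prod ν)) :
    BEP ν m g = ∫ D, g D * m D ∂(volume : Measure (Fin n → ℝ)).prod ν :=
  (integral_prod_symm _ h).symm

end BayesianExpectedPower

theorem stmt_2_general {n d : ℕ}
    {Θ : Type} [MeasurableSpace Θ] (ρ : Measure Θ) [IsProbabilityMeasure ρ]
    (q : Θ → (Fin n → Fin d → ℝ) → (Fin n → Bool) → (Fin n → ℝ) → ℝ)
    (hq_meas : Measurable (fun z : Θ × (Fin n → Fin d → ℝ) × (Fin n → Bool) × (Fin n → ℝ) =>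
      q z.1 z.2.1 z.2.2.1 z.2.2.2))
    (hq_nonneg : ∀ θ x a y, 0 ≤ q θ x a y)
    (hq_norm : ∀ θ x a, ∫ y, q θ x a y = 1)
    (m : TrialData n d → ℝ)
    (hm : ∀ D : TrialData n d, m D = ∫ θ, q θ D.2.1 D.2.2 D.1 ∂ρ)
    (α : ℝ)
    (t : TrialData n d → ℝ) (ht : Measurable t) (hqt : IsPermQuantile m α t)
    (ν : Measure ((Fin n → Fin d → ℝ) × (Fin n → Bool))) [IsProbabilityMeasure ν]
    (hν : ∀ τ : Equiv.Perm (Fin n),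
      ν.map (fun xa : (Fin n → Fin d → ℝ) × (Fin n → Bool) => (xa.1, xa.2 ∘ τ)) = ν)
    (φ' : TrialData n d → ℝ) (hφ'_meas : Measurable φ')
    (hφ'_range : ∀ D, φ' D ∈ Set.Icc (0 : ℝ) 1)
    (hφ'_level : ∀ p : Measure (TrialData n d), IsProbabilityMeasure p →
      SatisfiesH0 p → ∫ D, φ' D ∂p ≤ α) :
    BEP ν m φ' ≤ BEP ν m (permTest m α t) := by
  have hm_meas : Measurable m := funext hm ▸ measurable_mixture hq_meas
  have hm_nonneg (D : TrialData n d) : 0 ≤ m D :=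
    hm D ▸ integral_nonneg fun θ => hq_nonneg _ _ _ _
  have hm_int : Integrable m ((volume : Measure (Fin n → ℝ)).prod ν) :=
    integrable_prod_of_integral_eq_one hm_meas.aestronglyMeasurable hm_nonneg fun xa => by
      simpa only [hm] using integral_mixture_eq_one hq_meas hq_nonneg hq_norm xa.1 xa.2
  have hφ_int := hm_int.mul_of_mem_Icc (measurable_permTest hm_meas ht).aestronglyMeasurable
    (permTest_mem_Icc hqt)
  have hφ'_int := hm_int.mul_of_mem_Icc hφ'_meas.aestronglyMeasurable hφ'_range
  rw [BEP_eq_integral_prod hφ_int, BEP_eq_integral_prod hφ'_int, ← sub_nonneg,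
    ← integral_sub hφ_int hφ'_int]
  refine integral_nonneg_of_sum_comp_nonneg (measurePreserving_permData hν)
    (hφ_int.sub hφ'_int) fun D => ?_
  simp only [← sub_mul]
  refine sum_sub_mul_nonneg_of_threshold (t D) (fun _ => hm_nonneg _) (fun _ => hφ'_range _) ?_
    (fun τ h => ?_) (fun τ h => ?_)
  · rw [Finset.sum_congr rfl fun τ _ => permTest_permData hqt D τ,
      sum_permTest_const_permData (hqt D)]
    exact sum_permData_le_of_level hφ'_level D
  · rw [permTest_permData hqt]; simp [permTest, h]
  · rw [permTest_permData hqt]; simp [permTest, h, h.not_gt]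

theorem stmt_2 {n d : ℕ} (hn : 1 ≤ n) (hd : 1 ≤ d)
    {Θ : Type} [MeasurableSpace Θ] (ρ : Measure Θ) [IsProbabilityMeasure ρ]
    (q : Θ → (Fin n → Fin d → ℝ) → (Fin n → Bool) → (Fin n → ℝ) → ℝ)
    (hq_meas : Measurable (fun z : Θ × (Fin n → Fin d → ℝ) × (Fin n → Bool) × (Fin n → ℝ) =>
      q z.1 z.2.1 z.2.2.1 z.2.2.2))
    (hq_nonneg : ∀ θ x a y, 0 ≤ q θ x a y)
    (hq_norm : ∀ θ x a, ∫ y, q θ x a y = 1)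
    (m : TrialData n d → ℝ)
    (hm : ∀ D : TrialData n d, m D = ∫ θ, q θ D.2.1 D.2.2 D.1 ∂ρ)
    (α : ℝ) (hα : α ∈ Set.Icc (0 : ℝ) 1)
    (t : TrialData n d → ℝ) (ht : Measurable t) (hqt : IsPermQuantile m α t)
    (ν : Measure ((Fin n → Fin d → ℝ) × (Fin n → Bool))) [IsProbabilityMeasure ν]
    (hν : ∀ τ : Equiv.Perm (Fin n),
      ν.map (fun xa : (Fin n → Fin d → ℝ) × (Fin n → Bool) => (xa.1, xa.2 ∘ τ)) = ν)
    (φ' : TrialData n d → ℝ) (hφ'_meas : Measurable φ')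
    (hφ'_range : ∀ D, φ' D ∈ Set.Icc (0 : ℝ) 1)
    (hφ'_level : ∀ p : Measure (TrialData n d), IsProbabilityMeasure p →
      SatisfiesH0 p → ∫ D, φ' D ∂p ≤ α) :
    BEP ν m φ' ≤ BEP ν m (permTest m α t) :=
  stmt_2_general ρ q hq_meas hq_nonneg hq_norm m hm α t ht hqt ν hν φ' hφ'_meas hφ'_range hφ'_level

end
end

section
/- Fix w₀ ∈ (0,1), a > 0, b ∈ ℝ, r > 0, and α ∈ (0,1). For r_E > 0, define g(r, r_E, a, b, w₀) = P( Φ(max(U₁,U₀)) − Φ(min(U₁,U₀)) > 1−α ), where Φ is the standard normal cumulative distribution function and (U₁,U₀) is bivariate normal with mean μ(r_E) = ( a·r^{1/2}/((r+1)·w₀(1−w₀))^{1/2}, (−[r(r+r_E+1)+2r_E]·a + 2(r+1)·r_E·b)/((r+r_E+1)·(r(r+1)·w₀(1−w₀))^{1/2}) ) and covariance Σ(r_E) = [[1,−1],[−1, 1 + 4r_E/(r(r+r_E+1))]]. Then lim_{r_E → ∞} g(r, r_E, a, b, w₀) = P( Φ(max(V₁,V₀)) − Φ(min(V₁,V₀))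 > 1−α ), where (V₁,V₀) is bivariate normal with mean μ_∞ = ( a·r^{1/2}/((r+1)·w₀(1−w₀))^{1/2}, (−a(r+2) + 2(r+1)b)/((r(r+1)·w₀(1−w₀))^{1/2}) ) and covariance Σ_∞ = [[1,−1],[−1, 1+4/r]]. -/
/-!
As `r_E → ∞` the second mean coordinate tends to `(−a(r+2)+2(r+1)b)/√(r(r+1)w₀(1−w₀))` and
`s = √(4r_E/(r(r+r_E+1)))` tends to `√(4/r)`, so it suffices that `limitPower α` is continuous in
`(μ₁, μ₂, s)`. By monotonicity of `Φ` the statistic is `|Φ(U₁) − Φ(U₀)|`, a function of the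
parameters and of the Gaussian point `z`, continuous in the parameters. By dominated convergence
the Gaussian measure of its superlevel set `{· > 1 − α}` is then continuous wherever the level set
`{· = 1 − α}` is null, and it always is: for fixed `z₂`, the map
`z₁ ↦ Φ(z₁ + μ₁) − Φ(−z₁ + s z₂ + μ₂)` is strictly increasing, so every horizontal slice of the
level set has at most two points.
-/

open MeasureTheory ProbabilityTheory Filter

noncomputable section

/-- The standard normal cumulative distribution function `Φ`. -/
def stdNormalCDF (x : ℝ) : ℝ := ((gaussianReal 0 1) (Set.Iic x)).toReal

/-- `P(Φ(max(U₁,U₀)) − Φ(min(U₁,U₀)) > 1−α)` for the bivariate normal vector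
`(U₁,U₀) = (z₁ + μ₁, −z₁ + s·z₂ + μ₂)`, `(z₁,z₂)` a standard two-dimensional
Gaussian; `(U₁,U₀)` has mean `(μ₁,μ₂)` and covariance `[[1,−1],[−1,1+s²]]`. -/
def limitPower (α μ₁ μ₂ s : ℝ) : ℝ :=
  (((gaussianReal 0 1).prod (gaussianReal 0 1))
    {z : ℝ × ℝ | 1 - α <
      stdNormalCDF (max (z.1 + μ₁) (-z.1 + s * z.2 + μ₂)) -
        stdNormalCDF (min (z.1 + μ₁) (-z.1 + s * z.2 + μ₂))}).toReal

/-- The limiting power function `g(r, r_E, a, b, w₀)` of Proposition 3 at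
level `α`: the bivariate normal vector has mean
`( a√r/√((r+1)w₀(1−w₀)),
   (−[r(r+r_E+1)+2r_E]a + 2(r+1)r_E·b)/((r+r_E+1)√(r(r+1)w₀(1−w₀))) )`
and covariance `[[1,−1],[−1,1+4r_E/(r(r+r_E+1))]]`. -/
def gPower (r rE a b w₀ α : ℝ) : ℝ :=
  limitPower α
    (a * Real.sqrt r / Real.sqrt ((r + 1) * w₀ * (1 - w₀)))
    ((-(r * (r + rE + 1) + 2 * rE) * a + 2 * (r + 1) * rE * b) /
      ((r + rE + 1) * Real.sqrt (r * (r + 1) * w₀ * (1 - w₀))))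
    (Real.sqrt (4 * rE / (r * (r + rE + 1))))

open Topology

lemma stdNormalCDF_eq_integral (x : ℝ) :
    stdNormalCDF x = ∫ t in Set.Iic x, gaussianPDFReal 0 1 t := by
  rw [stdNormalCDF, gaussianReal_apply_eq_integral 0 one_ne_zero,
    ENNReal.toReal_ofReal (integral_nonneg fun t => gaussianPDFReal_nonneg 0 1 t)]

lemma stdNormalCDF_sub_stdNormalCDF (x y : ℝ) :
    stdNormalCDF y - stdNormalCDF x = ∫ t in x..y, gaussianPDFReal 0 1 t := by
  have hint := integrable_gaussianPDFReal 0 1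
  rw [stdNormalCDF_eq_integral, stdNormalCDF_eq_integral,
    intervalIntegral.integral_Iic_sub_Iic hint.integrableOn hint.integrableOn]

@[fun_prop]
lemma continuous_stdNormalCDF : Continuous stdNormalCDF := by
  refine ((continuous_const (y := stdNormalCDF 0)).add
    ((integrable_gaussianPDFReal 0 1).continuous_primitive 0)).congr fun x => ?_
  simp only [← stdNormalCDF_sub_stdNormalCDF, Pi.add_apply, add_sub_cancel]

lemma strictMono_stdNormalCDF : StrictMono stdNormalCDF := fun x y hxy => by
  have hpos : 0 < ∫ t in x..y, gaussianPDFReal 0 1 t :=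
    intervalIntegral.intervalIntegral_pos_of_pos_on
      (integrable_gaussianPDFReal 0 1).intervalIntegrable
      (fun t _ => gaussianPDFReal_pos 0 1 t one_ne_zero) hxy
  linarith [stdNormalCDF_sub_stdNormalCDF x y]

lemma stdNormalCDF_max_sub_stdNormalCDF_min (u v : ℝ) :
    stdNormalCDF (max u v) - stdNormalCDF (min u v) = |stdNormalCDF u - stdNormalCDF v| := by
  rw [strictMono_stdNormalCDF.monotone.map_max, strictMono_stdNormalCDF.monotone.map_min,
    max_sub_min_eq_abs']

lemma strictMono_stdNormalCDF_sub_stdNormalCDF_neg (μ c : ℝ) :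
    StrictMono fun x => stdNormalCDF (x + μ) - stdNormalCDF (-x + c) := fun u v huv => by
  have h₁ := strictMono_stdNormalCDF (show u + μ < v + μ by linarith)
  have h₂ := strictMono_stdNormalCDF (show -v + c < -u + c by linarith)
  linarith

theorem MeasureTheory.Measure.prod_eq_zero_of_finite_slices {α β : Type*} [MeasurableSpace α]
    [MeasurableSpace β] {μ : Measure α} [NullSingletonClass μ] [SFinite μ] {ν : Measure β}
    [SFinite ν] {s : Set (α × β)} (hs : MeasurableSet s)
    (hslice : ∀ y, {x | (x, y) ∈ s}.Finite) : μ.prod ν s = 0 := by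
  rw [Measure.prod_apply_symm hs]
  simp_rw [show ∀ y, μ ((fun x => (x, y)) ⁻¹' s) = 0 from fun y => (hslice y).measure_zero μ,
    lintegral_zero]

theorem continuousAt_measureReal_setOf_lt {X Z : Type*} [TopologicalSpace X]
    [FirstCountableTopology X] [MeasurableSpace Z] {ν : Measure Z} [IsFiniteMeasure ν]
    {F : X → Z → ℝ} {x₀ : X} {c : ℝ} (hmeas : ∀ x, Measurable (F x))
    (hcont : ∀ z, ContinuousAt (F · z) x₀) (hnull : ν {z | F x₀ z = c} = 0) :
    ContinuousAt (fun x => ν.real {z | c < F x z}) x₀ := by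
  have hlim : ∀ᵐ z ∂ν, ∀ᶠ x in 𝓝 x₀, c < F x z ↔ c < F x₀ z := by
    refine measure_eq_zero_iff_ae_notMem.1 hnull |>.mono fun z hz => ?_
    rcases lt_or_gt_of_ne (hz : F x₀ z ≠ c) with h | h
    · filter_upwards [(hcont z).eventually_lt_const h] with x hx
      exact iff_of_false hx.not_gt h.not_gt
    · filter_upwards [(hcont z).eventually_const_lt h] with x hx
      exact iff_of_true hx h
  exact (ENNReal.tendsto_toReal (measure_ne_top _ _)).comp
    (tendsto_measure_of_ae_tendsto_indicator_of_isFiniteMeasure _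
      (measurableSet_lt measurable_const (hmeas x₀))
      (fun x => measurableSet_lt measurable_const (hmeas x)) hlim)

lemma limitPower_eq_measureReal (α μ₁ μ₂ s : ℝ) :
    limitPower α μ₁ μ₂ s = ((gaussianReal 0 1).prod (gaussianReal 0 1)).real
      {z | 1 - α < |stdNormalCDF (z.1 + μ₁) - stdNormalCDF (-z.1 + s * z.2 + μ₂)|} := by
  simp only [limitPower, stdNormalCDF_max_sub_stdNormalCDF_min, measureReal_def]

theorem continuous_limitPower (α : ℝ) :
    Continuous fun θ : ℝ × ℝ × ℝ => limitPower α θ.1 θ.2.1 θ.2.2 := by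
  have := nullSingletonClass_gaussianReal (μ := 0) one_ne_zero
  simp only [limitPower_eq_measureReal]
  refine continuous_iff_continuousAt.2 fun ⟨μ₁, μ₂, s⟩ =>
    continuousAt_measureReal_setOf_lt (fun _ => by fun_prop) (fun _ => by fun_prop) ?_
  refine Measure.prod_eq_zero_of_finite_slices (measurableSet_eq_fun (by fun_prop) (by fun_prop))
    fun y => ((Set.toFinite {1 - α, -(1 - α)}).preimage
      (strictMono_stdNormalCDF_sub_stdNormalCDF_neg μ₁ (s * y + μ₂)).injective.injOn).subset ?_
  intro x hx
  simpa [add_assoc] using eq_or_eq_neg_of_abs_eq hx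

lemma tendsto_div_mul_add_atTop (p q c d : ℝ) :
    Tendsto (fun t => (p * t + q) / (c * (t + d))) atTop (𝓝 (p / c)) := by
  rcases eq_or_ne c 0 with rfl | hc
  · simp -- both sides are `0`, by the convention `x / 0 = 0`
  have hlim : Tendsto (fun t => (p + q * t⁻¹) / (c * (1 + d * t⁻¹))) atTop
      (𝓝 ((p + q * 0) / (c * (1 + d * 0)))) :=
    (tendsto_const_nhds.add (tendsto_const_nhds.mul tendsto_inv_atTop_zero)).div
      (tendsto_const_nhds.mul (tendsto_const_nhds.add
        (tendsto_const_nhds.mul tendsto_inv_atTop_zero))) (by simpa using hc)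
  simp only [mul_zero, add_zero, mul_one] at hlim
  refine hlim.congr' ?_
  filter_upwards [eventually_gt_atTop 0] with t ht
  rw [← mul_div_mul_right _ _ ht.ne']
  congr 1 <;> field_simp

theorem stmt_12_general (w₀ a b r α : ℝ) :
    Tendsto (fun rE : ℝ => gPower r rE a b w₀ α) atTop
      (nhds (limitPower α
        (a * Real.sqrt r / Real.sqrt ((r + 1) * w₀ * (1 - w₀)))
        ((-a * (r + 2) + 2 * (r + 1) * b) / Real.sqrt (r * (r + 1) * w₀ * (1 - w₀)))
        (Real.sqrt (4 / r)))) := by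
  set μ₁ := a * Real.sqrt r / Real.sqrt ((r + 1) * w₀ * (1 - w₀))
  set c := Real.sqrt (r * (r + 1) * w₀ * (1 - w₀))
  have hmean : Tendsto (fun t => (-(r * (r + t + 1) + 2 * t) * a + 2 * (r + 1) * t * b) /
      ((r + t + 1) * c)) atTop (𝓝 ((-a * (r + 2) + 2 * (r + 1) * b) / c)) := by
    convert tendsto_div_mul_add_atTop (-a * (r + 2) + 2 * (r + 1) * b) (-(r * (r + 1)) * a) c
      (r + 1) using 2 with t
    congr 1 <;> ring
  have hvar : Tendsto (fun t => Real.sqrt (4 * t / (r * (r + t + 1)))) atTop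
      (𝓝 (Real.sqrt (4 / r))) := by
    refine (Real.continuous_sqrt.tendsto _).comp ?_
    convert tendsto_div_mul_add_atTop 4 0 r (r + 1) using 2 with t
    congr 1 <;> ring
  have hparams := (tendsto_const_nhds (x := μ₁)).prodMk_nhds (hmean.prodMk_nhds hvar)
  -- elaborated before unification: against the goal, Lean would unfold `gPower` and time out
  exact (((continuous_limitPower α).tendsto _).comp hparams :)

theorem stmt_12 (w₀ a b r α : ℝ)
    (hw₀ : w₀ ∈ Set.Ioo (0 : ℝ) 1) (ha : 0 < a) (hr : 0 < r)
    (hα : α ∈ Set.Ioo (0 : ℝ) 1) :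
    Tendsto (fun rE : ℝ => gPower r rE a b w₀ α) atTop
      (nhds (limitPower α
        (a * Real.sqrt r / Real.sqrt ((r + 1) * w₀ * (1 - w₀)))
        ((-a * (r + 2) + 2 * (r + 1) * b) / Real.sqrt (r * (r + 1) * w₀ * (1 - w₀)))
        (Real.sqrt (4 / r)))) :=
  stmt_12_general w₀ a b r α

end
end
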